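/- Let f ∈ ℂ⟦x,y⟧ with jet₃(f) = x²y. Then the ideal ⟨∂f/∂x, ∂f/∂y⟩ + ⟨x,y⟩³ equals ⟨x², xy, y³⟩ modulo ⟨x,y⟩³-adjustments, and dim_ℂ(ℂ⟦x,y⟧ / (⟨∂f/∂x, ∂f/∂y⟩ + ⟨x,y⟩³)) = 4. -/

import Mathlib

/- STATEMENT 4: Let f ∈ ℂ⟦x,y⟧ with jet₃(f) = x²y (i.e. f − x²y ∈ ⟨x,y⟩⁴).
Then the equimultiplicity ideal ⟨∂f/∂x, ∂f/∂y⟩ + ⟨x,y⟩³ equals ⟨x², xy, y³⟩,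
and its colength is dim_ℂ(R/(⟨f_x,f_y⟩+m³)) = 4. -/

noncomputable section

abbrev R2 : Type := MvPowerSeries (Fin 2) ℂ

noncomputable def Xv : R2 := MvPowerSeries.X 0
noncomputable def Yv : R2 := MvPowerSeries.X 1

noncomputable def mR2 : Ideal R2 := Ideal.span {Xv, Yv}

/-- formal partial derivative of a power series in two variables -/
noncomputable def pd (i : Fin 2) (f : R2) : R2 :=
  fun m => ((m i : ℂ) + 1) * MvPowerSeries.coeff (m + Finsupp.single i 1) f

/-!
Write `f = x²y + g` with `g ∈ m⁴`. Partial derivatives are derivations, and a derivation maps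
`m⁴` into `m³`, so `f_x ≡ 2xy` and `f_y ≡ x²` modulo `m³`; since `m³ ⊆ ⟨x², xy, y³⟩ ∋ y³`, this
gives `⟨f_x, f_y⟩ + m³ = ⟨x², xy, y³⟩`. A power series lies in a monomial ideal exactly when its
coefficients vanish off the up-set of the generating exponents, so the coefficients at the
staircase `1, x, y, y²` identify the quotient with `ℂ⁴`.
-/

namespace Derivation

variable {R A : Type*} [CommSemiring R] [CommRing A] [Algebra R A]

theorem map_mem_pow_of_mem_pow_succ (D : Derivation R A A) {I : Ideal A} :
    ∀ {n : ℕ} {a : A}, a ∈ I ^ (n + 1) → D a ∈ I ^ n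
  | 0, _, _ => by simp
  | n + 1, a, ha => by
    rw [pow_succ'] at ha
    refine Submodule.mul_induction_on ha (fun b hb c hc => ?_) fun x y hx hy => ?_
    · rw [D.leibniz, smul_eq_mul, smul_eq_mul]
      refine add_mem ?_ (Ideal.mul_mem_right _ _ hc)
      rw [pow_succ']
      exact Ideal.mul_mem_mul hb (map_mem_pow_of_mem_pow_succ D hc)
    · rw [map_add]; exact add_mem hx hy

end Derivation

namespace MvPowerSeries

variable {σ R : Type*} [CommSemiring R]

theorem le_order_of_mem_pow {I : Ideal (MvPowerSeries σ R)}
    (hI : I ≤ RingHom.ker (constantCoeff (σ := σ) (R := R))) :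
    ∀ {n : ℕ} {f : MvPowerSeries σ R}, f ∈ I ^ n → (n : ℕ∞) ≤ f.order
  | 0, _, _ => by simp
  | n + 1, f, hf => by
    rw [pow_succ] at hf
    refine Submodule.mul_induction_on hf (fun a ha b hb => ?_) fun x y hx hy => ?_
    · have hb' : 1 ≤ b.order := one_le_order_iff_constCoeff_eq_zero.mpr (hI hb)
      calc ((n + 1 : ℕ) : ℕ∞) ≤ a.order + b.order := by
            push_cast; exact add_le_add (le_order_of_mem_pow hI ha) hb'
        _ ≤ (a * b).order := le_order_mul
    · exact (le_min hx hy).trans min_order_le_add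

theorem coeff_eq_zero_of_mem_span_monomial {A : Set (σ →₀ ℕ)} {f : MvPowerSeries σ R}
    (hf : f ∈ Ideal.span ((monomial · (1 : R)) '' A)) :
    ∀ d, (∀ α ∈ A, ¬ α ≤ d) → coeff d f = 0 := by
  classical
  induction hf using Submodule.span_induction with
  | mem g hg =>
    obtain ⟨α, hα, rfl⟩ := hg
    intro d hd
    rw [coeff_monomial, if_neg]
    exact fun h => hd α hα h.ge
  | zero => simp
  | add g h _ _ hg hh => intro d hd; rw [map_add, hg d hd, hh d hd, add_zero]
  | smul c g _ hg =>
    intro d hd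
    rw [smul_eq_mul, coeff_mul]
    refine Finset.sum_eq_zero fun pq hpq => ?_
    have hle : pq.2 ≤ d := (Finset.HasAntidiagonal.mem_antidiagonal.mp hpq) ▸ le_add_self
    rw [hg pq.2 fun α hα h => hd α hα (h.trans hle), mul_zero]

theorem mem_span_monomial_of_coeff_eq_zero {A : Finset (σ →₀ ℕ)} {f : MvPowerSeries σ R}
    (hf : ∀ d, (∀ α ∈ A, ¬ α ≤ d) → coeff d f = 0) :
    f ∈ Ideal.span ((monomial · (1 : R)) '' A) := by
  classical
  induction A using Finset.induction_on generalizing f with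
  | empty =>
    rw [show f = 0 from ext fun d => by simpa using hf d]
    exact zero_mem _
  | insert α A _ ih =>
    obtain ⟨g, hg⟩ : ∃ g : MvPowerSeries σ R, ∀ d, coeff d g = coeff (d + α) f :=
      ⟨fun d => coeff (d + α) f, fun _ => rfl⟩
    obtain ⟨h, hh⟩ : ∃ h : MvPowerSeries σ R, ∀ d, coeff d h = if α ≤ d then 0 else coeff d f :=
      ⟨fun d => if α ≤ d then 0 else coeff d f, fun _ => rfl⟩
    have hfgh : f = monomial α 1 * g + h := by
      ext d
      by_cases hd : α ≤ d <;> simp [coeff_monomial_mul, hg, hh, hd, tsub_add_cancel_of_le]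
    have hmono : Ideal.span ((monomial · (1 : R)) '' A) ≤
        Ideal.span ((monomial · (1 : R)) '' (↑(insert α A) : Set (σ →₀ ℕ))) := by
      gcongr
      exact Finset.subset_insert α A
    rw [hfgh]
    refine add_mem (Ideal.mul_mem_right _ _ (Ideal.subset_span ⟨α, by simp, rfl⟩))
      (hmono (ih fun d hd => ?_))
    by_cases hαd : α ≤ d
    · simp [hh, hαd]
    · simpa [hh, hαd] using hf d (by simpa [hαd] using hd)

theorem mem_span_monomial_iff {A : Finset (σ →₀ ℕ)} {f : MvPowerSeries σ R} :
    f ∈ Ideal.span ((monomial · (1 : R)) '' A) ↔ ∀ d, (∀ α ∈ A, ¬ α ≤ d) → coeff d f = 0 :=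
  ⟨coeff_eq_zero_of_mem_span_monomial, mem_span_monomial_of_coeff_eq_zero⟩

theorem finrank_quotient_span_monomial {k : Type*} [Field k] {A S : Finset (σ →₀ ℕ)}
    (hS : ∀ d, d ∈ S ↔ ∀ α ∈ A, ¬ α ≤ d) :
    Module.finrank k (MvPowerSeries σ k ⧸ Ideal.span ((monomial · (1 : k)) '' A)) = S.card := by
  classical
  let φ : MvPowerSeries σ k →ₗ[k] (S → k) := LinearMap.pi fun d => coeff d.1
  have hker : LinearMap.ker φ = (Ideal.span ((monomial · (1 : k)) '' A)).restrictScalars k := by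
    ext f
    simp [φ, mem_span_monomial_iff, ← hS, funext_iff]
  have hφ : Function.Surjective φ := fun c =>
    ⟨fun d => if h : d ∈ S then c ⟨d, h⟩ else 0, funext fun d => dif_pos d.2⟩
  let e := (Submodule.Quotient.restrictScalarsEquiv k _).symm ≪≫ₗ
    Submodule.quotEquivOfEq _ _ hker.symm ≪≫ₗ φ.quotKerEquivOfSurjective hφ
  rw [e.finrank_eq, Module.finrank_fintype_fun_eq_card, Fintype.card_coe]

end MvPowerSeries

open MvPowerSeries

theorem pd_eq_pderiv (i : Fin 2) (f : R2) : pd i f = pderiv ℂ i f := by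
  ext d
  rw [coeff_pderiv, mul_comm]
  rfl

def expo (a b : ℕ) : Fin 2 →₀ ℕ := Finsupp.single 0 a + Finsupp.single 1 b

@[simp] theorem expo_apply_zero (a b : ℕ) : expo a b 0 = a := by simp [expo]
@[simp] theorem expo_apply_one (a b : ℕ) : expo a b 1 = b := by simp [expo]

theorem eq_expo (d : Fin 2 →₀ ℕ) : d = expo (d 0) (d 1) :=
  Finsupp.ext <| Fin.forall_fin_two.mpr ⟨by simp, by simp⟩

@[simp] theorem expo_le_expo_iff {a b c e : ℕ} : expo a b ≤ expo c e ↔ a ≤ c ∧ b ≤ e := by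
  simp only [Finsupp.le_def, Fin.forall_fin_two, expo_apply_zero, expo_apply_one]

@[simp] theorem expo_inj {a b c e : ℕ} : expo a b = expo c e ↔ a = c ∧ b = e := by
  simp [Finsupp.ext_iff, Fin.forall_fin_two]

theorem monomial_expo (a b : ℕ) : monomial (expo a b) (1 : ℂ) = Xv ^ a * Yv ^ b := by
  rw [Xv, Yv, X_pow_eq, X_pow_eq, monomial_mul_monomial, one_mul, expo]

theorem span_X_sq_XY_Y_cube_eq_span_monomial :
    Ideal.span {Xv ^ 2, Xv * Yv, Yv ^ 3} =
      Ideal.span ((monomial · (1 : ℂ)) ''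
        (↑({expo 2 0, expo 1 1, expo 0 3} : Finset (Fin 2 →₀ ℕ)) : Set (Fin 2 →₀ ℕ))) := by
  simp [Set.image_insert_eq, monomial_expo]

theorem mem_staircase_iff (d : Fin 2 →₀ ℕ) :
    d ∈ ({expo 0 0, expo 1 0, expo 0 1, expo 0 2} : Finset _) ↔
      ∀ α ∈ ({expo 2 0, expo 1 1, expo 0 3} : Finset _), ¬ α ≤ d := by
  rw [eq_expo d]
  simp only [Finset.mem_insert, Finset.mem_singleton, expo_inj, forall_eq_or_imp,
    forall_eq, expo_le_expo_iff]
  omega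

theorem degree_expo (a b : ℕ) : (expo a b).degree = a + b := by
  simp [Finsupp.degree_eq_sum, Fin.sum_univ_two]

theorem mR2_le_ker_constantCoeff : mR2 ≤ RingHom.ker (constantCoeff (σ := Fin 2) (R := ℂ)) := by
  rw [mR2, Ideal.span_le]
  rintro _ (rfl | rfl) <;> simp [Xv, Yv]

theorem mR2_pow_three_le : mR2 ^ 3 ≤ Ideal.span {Xv ^ 2, Xv * Yv, Yv ^ 3} := by
  intro f hf
  rw [span_X_sq_XY_Y_cube_eq_span_monomial]
  refine mem_span_monomial_of_coeff_eq_zero fun d hd => coeff_of_lt_order ?_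
  refine lt_of_lt_of_le ?_ (le_order_of_mem_pow mR2_le_ker_constantCoeff hf)
  rw [← mem_staircase_iff] at hd
  simp only [Finset.mem_insert, Finset.mem_singleton] at hd
  rcases hd with rfl | rfl | rfl | rfl <;> norm_num [degree_expo]

theorem finrank_quotient_span_X_sq_XY_Y_cube :
    Module.finrank ℂ (R2 ⧸ Ideal.span {Xv ^ 2, Xv * Yv, Yv ^ 3}) = 4 := by
  rw [span_X_sq_XY_Y_cube_eq_span_monomial, finrank_quotient_span_monomial mem_staircase_iff]
  simp

theorem pderiv_zero_X_sq_Y : pderiv ℂ 0 (Xv ^ 2 * Yv) = 2 * (Xv * Yv) := by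
  rw [Derivation.leibniz, pderiv_pow, Xv, Yv, pderiv_X_self, pderiv_X_of_ne one_ne_zero,
    smul_zero, zero_add, smul_eq_mul]
  ring

theorem pderiv_one_X_sq_Y : pderiv ℂ 1 (Xv ^ 2 * Yv) = Xv ^ 2 := by
  rw [Derivation.leibniz, pderiv_pow, Xv, Yv, pderiv_X_self, pderiv_X_of_ne zero_ne_one,
    mul_zero, smul_zero, add_zero, smul_eq_mul, mul_one]

theorem pd_sub_pderiv_X_sq_Y_mem {f : R2} (hjet : f - Xv ^ 2 * Yv ∈ mR2 ^ 4) (i : Fin 2) :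
    pd i f - pderiv ℂ i (Xv ^ 2 * Yv) ∈ mR2 ^ 3 := by
  rw [pd_eq_pderiv, ← map_sub]
  exact (pderiv ℂ i).map_mem_pow_of_mem_pow_succ hjet

theorem span_pd_sup_eq {f : R2} (hjet : f - Xv ^ 2 * Yv ∈ mR2 ^ 4) :
    Ideal.span {pd 0 f, pd 1 f} ⊔ mR2 ^ 3 = Ideal.span {Xv ^ 2, Xv * Yv, Yv ^ 3} := by
  have h0 := pd_sub_pderiv_X_sq_Y_mem hjet 0
  have h1 := pd_sub_pderiv_X_sq_Y_mem hjet 1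
  rw [pderiv_zero_X_sq_Y] at h0
  rw [pderiv_one_X_sq_Y] at h1
  have hX2 : Xv ^ 2 ∈ Ideal.span {Xv ^ 2, Xv * Yv, Yv ^ 3} := Ideal.subset_span (by simp)
  have hXY : Xv * Yv ∈ Ideal.span {Xv ^ 2, Xv * Yv, Yv ^ 3} := Ideal.subset_span (by simp)
  have hpd0 : pd 0 f ∈ Ideal.span {pd 0 f, pd 1 f} ⊔ mR2 ^ 3 :=
    Ideal.mem_sup_left (Ideal.subset_span (by simp))
  have hpd1 : pd 1 f ∈ Ideal.span {pd 0 f, pd 1 f} ⊔ mR2 ^ 3 :=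
    Ideal.mem_sup_left (Ideal.subset_span (by simp))
  apply le_antisymm
  · refine sup_le (Ideal.span_le.mpr ?_) mR2_pow_three_le
    rintro _ (rfl | rfl)
    · simpa using add_mem (mR2_pow_three_le h0) (Ideal.mul_mem_left _ 2 hXY)
    · simpa using add_mem (mR2_pow_three_le h1) hX2
  · refine Ideal.span_le.mpr ?_
    rintro _ (rfl | rfl | rfl)
    · simpa using sub_mem hpd1 (Ideal.mem_sup_right h1)
    · have h2XY := sub_mem hpd0 (Ideal.mem_sup_right h0)
      rw [sub_sub_cancel, two_mul, ← two_smul ℂ] at h2XY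
      simpa using Submodule.smul_of_tower_mem _ (2 : ℂ)⁻¹ h2XY
    · exact Ideal.mem_sup_right (Ideal.pow_mem_pow (Ideal.subset_span (by simp)) 3)

theorem statement4 (f : R2)
    (hjet : f - Xv ^ 2 * Yv ∈ mR2 ^ 4) :
    Ideal.span {pd 0 f, pd 1 f} ⊔ mR2 ^ 3 =
      Ideal.span {Xv ^ 2, Xv * Yv, Yv ^ 3} ∧
    Module.finrank ℂ (R2 ⧸ (Ideal.span {pd 0 f, pd 1 f} ⊔ mR2 ^ 3)) = 4 := by
  rw [span_pd_sup_eq hjet]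
  exact ⟨rfl, finrank_quotient_span_X_sq_XY_Y_cube⟩

end
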